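/- For the instantaneous-links homogeneous setting with p ∈ (0,1) and α < (1-p)/p, with r = ⌈αN⌉ and τ₁,…,τ_r i.i.d. non-shifted geometric with parameter p, the error exponent lim_{N→∞} -(1/N) ln P(τ₁+⋯+τ_r > N) equals (1+α)·D(α/(1+α) ‖ 1-p). -/

import Mathlib

open MeasureTheory ProbabilityTheory Real Filter

/-- Binary Kullback–Leibler divergence (natural logarithm). -/
noncomputable def klBin (a b : ℝ) : ℝ := a * Real.log (a / b) + (1 - a) * Real.log ((1 - a) / (1 - b))

/-!
The sum `S` of `r = ⌈αN⌉` independent geometric variables is negative binomial, so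
`P(S > N) = ∑_{m > N} C(m + r - 1, r - 1) p^m (1-p)^r`. Since `r - 1 ≤ αN`, consecutive terms of
this tail have ratio at most `p(1+α) < 1`, so the tail lies within a constant factor of its first
term `C(N + r, r - 1) p^(N+1) (1-p)^r`. By Stirling's formula,
`(1/N) log C(N + r, r - 1) → (1+α) log(1+α) - α log α`, and collecting the exponents of `p` and
`1 - p` gives `(1+α) D(α/(1+α) ‖ 1-p)`.
-/

open Asymptotics Topology
open scoped Nat

noncomputable def stirlingRemainder (n : ℕ) : ℝ := log n ! - (n * log n - n)

lemma stirlingRemainder_eq (n : ℕ) :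
    stirlingRemainder n = log (Stirling.stirlingSeq n) + log (2 * n) / 2 := by
  rw [Stirling.log_stirlingSeq_formula, stirlingRemainder]
  rcases eq_or_ne n 0 with rfl | hn
  · simp
  · rw [log_div (by positivity) (exp_pos 1).ne', log_exp]
    ring

lemma isLittleO_stirlingRemainder :
    stirlingRemainder =o[atTop] (fun n : ℕ ↦ (n : ℝ)) := by
  have hnat : Tendsto (fun n : ℕ ↦ (n : ℝ)) atTop atTop := tendsto_natCast_atTop_atTop
  have hseq : (fun n ↦ log (Stirling.stirlingSeq n)) =o[atTop] (fun n : ℕ ↦ (n : ℝ)) :=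
    ((Stirling.tendsto_stirlingSeq_sqrt_pi.log (by positivity)).isBigO_one
      ℝ).trans_isLittleO ((isLittleO_one_left_iff ℝ).2 (tendsto_norm_atTop_atTop.comp hnat))
  have hlog : (fun n : ℕ ↦ log (2 * n) / 2) =o[atTop] (fun n : ℕ ↦ (n : ℝ)) := by
    have h := (isLittleO_log_id_atTop.comp_tendsto (hnat.const_mul_atTop two_pos)).trans_isBigO
      ((isBigO_refl (fun n : ℕ ↦ (n : ℝ)) atTop).const_mul_left 2)
    simpa only [Function.comp_def, div_eq_inv_mul] using h.const_mul_left 2⁻¹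
  exact (hseq.add hlog).congr_left fun n ↦ (stirlingRemainder_eq n).symm

lemma log_add_choose (a b : ℕ) :
    log ((a + b).choose a) = negMulLog a + negMulLog b - negMulLog (a + b) +
      (stirlingRemainder (a + b) - stirlingRemainder a - stirlingRemainder b) := by
  have hfac : ((a + b).choose a * b ! * a ! : ℝ) = (a + b)! := by
    exact_mod_cast add_comm a b ▸ Nat.add_choose_mul_factorial_mul_factorial b a
  have hchoose : ((a + b).choose a : ℝ) ≠ 0 := by
    exact_mod_cast (Nat.choose_pos (Nat.le_add_right a b)).ne'
  have hlog := congrArg log hfac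
  rw [log_mul (by positivity) (by positivity), log_mul hchoose (by positivity)] at hlog
  simp only [stirlingRemainder, negMulLog, Nat.cast_add]
  linarith

lemma negMulLog_add_negMulLog_sub_div (u v c : ℝ) :
    (negMulLog u + negMulLog v - negMulLog (u + v)) / c =
      negMulLog (u / c) + negMulLog (v / c) - negMulLog ((u + v) / c) := by
  simp only [div_eq_mul_inv, negMulLog_mul]
  ring

lemma Filter.Tendsto.add_const_div_natCast {u : ℕ → ℝ} {x : ℝ}
    (h : Tendsto (fun N : ℕ ↦ u N / N) atTop (𝓝 x)) (c : ℝ) :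
    Tendsto (fun N : ℕ ↦ (u N + c) / N) atTop (𝓝 x) := by
  simpa only [add_div, add_zero] using h.add (tendsto_const_div_atTop_nhds_zero_nat c)

lemma isLittleO_stirlingRemainder_comp {a : ℕ → ℕ} {x : ℝ} (hx : 0 < x)
    (ha : Tendsto (fun N : ℕ ↦ (a N : ℝ) / N) atTop (𝓝 x)) :
    (fun N ↦ stirlingRemainder (a N)) =o[atTop] (fun N : ℕ ↦ (N : ℝ)) := by
  have hnat : Tendsto (fun N : ℕ ↦ (N : ℝ)) atTop atTop := tendsto_natCast_atTop_atTop
  have hreal : Tendsto (fun N ↦ (a N : ℝ)) atTop atTop := by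
    refine (ha.pos_mul_atTop hx hnat).congr' ?_
    filter_upwards [eventually_ne_atTop 0] with N hN
    field_simp
  have hbig : (fun N ↦ (a N : ℝ)) =O[atTop] (fun N : ℕ ↦ (N : ℝ)) :=
    isBigO_of_div_tendsto_nhds ((eventually_ne_atTop 0).mono fun N hN h ↦
      absurd (Nat.cast_eq_zero.1 h) hN) x ha
  exact (isLittleO_stirlingRemainder.comp_tendsto
    (tendsto_natCast_atTop_iff.1 hreal)).trans_isBigO hbig

theorem tendsto_log_add_choose_div {a b : ℕ → ℕ} {x y : ℝ} (hx : 0 < x) (hy : 0 < y)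
    (ha : Tendsto (fun N : ℕ ↦ (a N : ℝ) / N) atTop (𝓝 x))
    (hb : Tendsto (fun N : ℕ ↦ (b N : ℝ) / N) atTop (𝓝 y)) :
    Tendsto (fun N : ℕ ↦ log ((a N + b N).choose (a N)) / N) atTop
      (𝓝 (negMulLog x + negMulLog y - negMulLog (x + y))) := by
  have hab : Tendsto (fun N : ℕ ↦ ((a N + b N : ℕ) : ℝ) / N) atTop (𝓝 (x + y)) := by
    simpa only [Nat.cast_add, add_div] using ha.add hb
  have hmain : Tendsto (fun N : ℕ ↦ negMulLog (a N / N) + negMulLog (b N / N) -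
      negMulLog ((a N + b N : ℕ) / N)) atTop
      (𝓝 (negMulLog x + negMulLog y - negMulLog (x + y))) :=
    ((continuous_negMulLog.tendsto x).comp ha |>.add ((continuous_negMulLog.tendsto y).comp hb)).sub
      ((continuous_negMulLog.tendsto (x + y)).comp hab)
  have herr : Tendsto (fun N : ℕ ↦ (stirlingRemainder (a N + b N) - stirlingRemainder (a N) -
      stirlingRemainder (b N)) / N) atTop (𝓝 0) :=
    (((isLittleO_stirlingRemainder_comp (add_pos hx hy) hab).sub
      (isLittleO_stirlingRemainder_comp hx ha)).sub
      (isLittleO_stirlingRemainder_comp hy hb)).tendsto_div_nhds_zero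
  simpa only [log_add_choose, add_div, negMulLog_add_negMulLog_sub_div, Nat.cast_add, add_zero]
    using hmain.add herr

section NegativeBinomial

open Finset

variable {Ω : Type*} [MeasurableSpace Ω] {μ : Measure Ω} {p : ℝ} {τ : ℕ → Ω → ℕ}

lemma measure_add_eq_sum_antidiagonal {X Y : Ω → ℕ} (hX : Measurable X) (hY : Measurable Y)
    (hXY : IndepFun X Y μ) (m : ℕ) :
    μ {ω | X ω + Y ω = m} = ∑ ij ∈ antidiagonal m, μ {ω | X ω = ij.1} * μ {ω | Y ω = ij.2} := by
  have hunion : {ω | X ω + Y ω = m} = ⋃ ij ∈ antidiagonal m, X ⁻¹' {ij.1} ∩ Y ⁻¹' {ij.2} := by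
    ext ω; simp
  rw [hunion, measure_biUnion_finset]
  · exact sum_congr rfl fun ij _ ↦
      hXY.measure_inter_preimage_eq_mul _ _ (measurableSet_singleton _) (measurableSet_singleton _)
  · intro ij _ kl _ hne
    refine Set.disjoint_left.2 fun ω h h' ↦ hne ?_
    simp only [Set.mem_inter_iff, Set.mem_preimage, Set.mem_singleton_iff] at h h'
    exact Prod.ext (h.1.symm.trans h'.1) (h.2.symm.trans h'.2)
  · exact fun ij _ ↦ (hX (measurableSet_singleton _)).inter (hY (measurableSet_singleton _))

lemma measure_lt_le_mul_inv_one_sub {X : Ω → ℕ} {q : ENNReal} (N : ℕ)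
    (hratio : ∀ m, N < m → μ {ω | X ω = m + 1} ≤ q * μ {ω | X ω = m}) :
    μ {ω | N < X ω} ≤ μ {ω | X ω = N + 1} * (1 - q)⁻¹ := by
  have hgeom : ∀ k : ℕ, μ {ω | X ω = N + 1 + k} ≤ μ {ω | X ω = N + 1} * q ^ k := by
    intro k
    induction k with
    | zero => simp
    | succ k ih =>
      calc μ {ω | X ω = N + 1 + (k + 1)} ≤ q * μ {ω | X ω = N + 1 + k} :=
            hratio (N + 1 + k) (by omega)
        _ ≤ q * (μ {ω | X ω = N + 1} * q ^ k) := by gcongr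
        _ = μ {ω | X ω = N + 1} * q ^ (k + 1) := by ring
  have hcover : {ω | N < X ω} ⊆ ⋃ k : ℕ, {ω | X ω = N + 1 + k} := by
    intro ω h
    exact Set.mem_iUnion.2 ⟨X ω - (N + 1), by simp only [Set.mem_ofPred_eq] at h ⊢; omega⟩
  calc μ {ω | N < X ω} ≤ μ (⋃ k : ℕ, {ω | X ω = N + 1 + k}) := measure_mono hcover
    _ ≤ ∑' k : ℕ, μ {ω | X ω = N + 1 + k} := measure_iUnion_le _
    _ ≤ ∑' k : ℕ, μ {ω | X ω = N + 1} * q ^ k := ENNReal.tsum_le_tsum hgeom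
    _ = μ {ω | X ω = N + 1} * (1 - q)⁻¹ := by rw [ENNReal.tsum_mul_left, ENNReal.tsum_geometric]

/-- The probability that a sum of `s + 1` independent geometric variables equals `m`. -/
noncomputable def negBinomialPMF (p : ℝ) (s m : ℕ) : ℝ :=
  (s + m).choose s * p ^ m * (1 - p) ^ (s + 1)

lemma negBinomialPMF_nonneg (hp0 : 0 ≤ p) (hp1 : p ≤ 1) (s m : ℕ) :
    0 ≤ negBinomialPMF p s m := by
  unfold negBinomialPMF
  have : 0 ≤ 1 - p := by linarith
  positivity

lemma negBinomialPMF_pos (hp0 : 0 < p) (hp1 : p < 1) (s m : ℕ) :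
    0 < negBinomialPMF p s m := by
  have hchoose : (0 : ℝ) < (s + m).choose s := by
    exact_mod_cast Nat.choose_pos (Nat.le_add_right s m)
  have : 0 < 1 - p := by linarith
  unfold negBinomialPMF
  positivity

lemma log_negBinomialPMF (hp0 : 0 < p) (hp1 : p < 1) (s m : ℕ) :
    log (negBinomialPMF p s m) =
      log ((s + m).choose s) + m * log p + (s + 1) * log (1 - p) := by
  have hchoose : ((s + m).choose s : ℝ) ≠ 0 := by
    exact_mod_cast (Nat.choose_pos (Nat.le_add_right s m)).ne'
  have : 0 < 1 - p := by linarith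
  rw [negBinomialPMF, log_mul (by positivity) (by positivity), log_mul hchoose (by positivity),
    log_pow, log_pow]
  push_cast
  ring

lemma measure_sum_range_eq_negBinomialPMF (hp0 : 0 ≤ p) (hp1 : p ≤ 1)
    (hmeas : ∀ i, Measurable (τ i))
    (hgeo : ∀ i, ∀ k : ℕ, μ {ω | τ i ω = k} = ENNReal.ofReal (p ^ k * (1 - p)))
    (hind : iIndepFun τ μ) (s m : ℕ) :
    μ {ω | ∑ i ∈ range (s + 1), τ i ω = m} = ENNReal.ofReal (negBinomialPMF p s m) := by
  induction s generalizing m with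
  | zero => simp [hgeo, negBinomialPMF]
  | succ s ih =>
    have hindep : IndepFun (τ (s + 1)) (fun ω ↦ ∑ i ∈ range (s + 1), τ i ω) μ := by
      simpa only [← Finset.sum_apply] using (hind.indepFun_finsetSum_of_notMem hmeas (by simp)).symm
    have hterm : ∀ ij ∈ antidiagonal m, μ {ω | τ (s + 1) ω = ij.1} *
        μ {ω | ∑ i ∈ range (s + 1), τ i ω = ij.2} =
        ENNReal.ofReal ((s + ij.2).choose s * (p ^ m * (1 - p) ^ (s + 2))) := by
      intro ij hij
      rw [HasAntidiagonal.mem_antidiagonal] at hij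
      have : 0 ≤ 1 - p := by linarith
      rw [hgeo, ih, negBinomialPMF, ← ENNReal.ofReal_mul (by positivity), ← hij, pow_add]
      ring_nf
    simp only [sum_range_succ_comm (fun i ↦ τ i _) (s + 1)]
    rw [measure_add_eq_sum_antidiagonal (hmeas _) (Finset.measurable_sum _ fun i _ ↦ hmeas i)
      hindep, sum_congr rfl hterm, ← ENNReal.ofReal_sum_of_nonneg fun _ _ ↦ by positivity,
      ← sum_mul, ← Nat.cast_sum, sum_antidiagonal_choose_add, negBinomialPMF,
      show s + m + 1 = s + 1 + m by omega]
    ring_nf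

lemma choose_add_succ_le {s m : ℕ} {α : ℝ} (h : (s : ℝ) ≤ α * (m + 1)) :
    ((s + (m + 1)).choose s : ℝ) ≤ (1 + α) * (s + m).choose s := by
  have hid : ((s + (m + 1)).choose s : ℝ) * (m + 1) = (s + m).choose s * (s + m + 1) := by
    have := Nat.choose_mul_succ_eq (s + m) s
    rw [show s + m + 1 - s = m + 1 by omega] at this
    exact_mod_cast this.symm
  have hm : (0 : ℝ) < m + 1 := by positivity
  refine le_of_mul_le_mul_right ?_ hm
  rw [hid]
  have : (0 : ℝ) ≤ (s + m).choose s := by positivity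
  nlinarith

lemma negBinomialPMF_succ_le {α : ℝ} (hp0 : 0 ≤ p) (hp1 : p ≤ 1) {s m : ℕ}
    (h : (s : ℝ) ≤ α * (m + 1)) :
    negBinomialPMF p s (m + 1) ≤ p * (1 + α) * negBinomialPMF p s m := by
  have : 0 ≤ p ^ m * (1 - p) ^ (s + 1) := by
    have : 0 ≤ 1 - p := by linarith
    positivity
  calc negBinomialPMF p s (m + 1)
      = p * ((s + (m + 1)).choose s * (p ^ m * (1 - p) ^ (s + 1))) := by
        rw [negBinomialPMF]; ring
    _ ≤ p * ((1 + α) * (s + m).choose s * (p ^ m * (1 - p) ^ (s + 1))) := by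
        gcongr; exact choose_add_succ_le h
    _ = p * (1 + α) * negBinomialPMF p s m := by rw [negBinomialPMF]; ring

lemma negBinomialPMF_le_toReal_measure_lt [IsFiniteMeasure μ] (hp0 : 0 ≤ p) (hp1 : p ≤ 1)
    (hmeas : ∀ i, Measurable (τ i))
    (hgeo : ∀ i, ∀ k : ℕ, μ {ω | τ i ω = k} = ENNReal.ofReal (p ^ k * (1 - p)))
    (hind : iIndepFun τ μ) (N s : ℕ) :
    negBinomialPMF p s (N + 1) ≤ (μ {ω | N < ∑ i ∈ range (s + 1), τ i ω}).toReal := by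
  rw [← ENNReal.toReal_ofReal (negBinomialPMF_nonneg hp0 hp1 s (N + 1)),
    ← measure_sum_range_eq_negBinomialPMF hp0 hp1 hmeas hgeo hind]
  exact ENNReal.toReal_mono (measure_ne_top _ _) (measure_mono fun ω h ↦ by
    simp only [Set.mem_ofPred_eq] at h ⊢; omega)

lemma toReal_measure_lt_le_negBinomialPMF_div (hp0 : 0 ≤ p) (hp1 : p ≤ 1)
    (hmeas : ∀ i, Measurable (τ i))
    (hgeo : ∀ i, ∀ k : ℕ, μ {ω | τ i ω = k} = ENNReal.ofReal (p ^ k * (1 - p)))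
    (hind : iIndepFun τ μ) {α : ℝ} (hα : 0 ≤ α) (hq : p * (1 + α) < 1) {N s : ℕ}
    (hs : (s : ℝ) ≤ α * N) :
    (μ {ω | N < ∑ i ∈ range (s + 1), τ i ω}).toReal ≤
      negBinomialPMF p s (N + 1) / (1 - p * (1 + α)) := by
  have hpmf := measure_sum_range_eq_negBinomialPMF hp0 hp1 hmeas hgeo hind s
  have hratio : ∀ m, N < m → μ {ω | ∑ i ∈ range (s + 1), τ i ω = m + 1} ≤
      ENNReal.ofReal (p * (1 + α)) * μ {ω | ∑ i ∈ range (s + 1), τ i ω = m} := by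
    intro m hm
    have hsm : (s : ℝ) ≤ α * (m + 1) := by
      have : (N : ℝ) ≤ m + 1 := by exact_mod_cast (by omega : N ≤ m + 1)
      nlinarith
    rw [hpmf, hpmf, ← ENNReal.ofReal_mul (by positivity)]
    exact ENNReal.ofReal_le_ofReal (negBinomialPMF_succ_le hp0 hp1 hsm)
  refine ENNReal.toReal_le_of_le_ofReal
    (div_nonneg (negBinomialPMF_nonneg hp0 hp1 s _) (by linarith)) ?_
  calc μ {ω | N < ∑ i ∈ range (s + 1), τ i ω}
      ≤ μ {ω | ∑ i ∈ range (s + 1), τ i ω = N + 1} * (1 - ENNReal.ofReal (p * (1 + α)))⁻¹ :=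
        measure_lt_le_mul_inv_one_sub N hratio
    _ = ENNReal.ofReal (negBinomialPMF p s (N + 1) / (1 - p * (1 + α))) := by
        rw [hpmf, ← ENNReal.ofReal_one, ← ENNReal.ofReal_sub _ (by positivity),
          ← ENNReal.ofReal_inv_of_pos (by linarith),
          ← ENNReal.ofReal_mul (negBinomialPMF_nonneg hp0 hp1 s _), div_eq_mul_inv]

lemma tendsto_log_negBinomialPMF_div {α : ℝ} (hp0 : 0 < p) (hp1 : p < 1) (hα : 0 < α)
    {s : ℕ → ℕ} (hs : Tendsto (fun N : ℕ ↦ (s N : ℝ) / N) atTop (𝓝 α)) :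
    Tendsto (fun N : ℕ ↦ log (negBinomialPMF p (s N) (N + 1)) / N) atTop
      (𝓝 (negMulLog α - negMulLog (α + 1) + log p + α * log (1 - p))) := by
  have hN : Tendsto (fun N : ℕ ↦ (N : ℝ) / N) atTop (𝓝 1) :=
    tendsto_const_nhds.congr' ((eventually_ne_atTop 0).mono fun N hN ↦
      (div_self (Nat.cast_ne_zero.2 hN)).symm)
  have hN1 : Tendsto (fun N : ℕ ↦ ((N + 1 : ℕ) : ℝ) / N) atTop (𝓝 1) := by
    simpa only [Nat.cast_add, Nat.cast_one] using hN.add_const_div_natCast 1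
  have hchoose := tendsto_log_add_choose_div hα one_pos hs hN1
  rw [negMulLog_one, add_zero] at hchoose
  have hlim := (hchoose.add ((hN.add_const_div_natCast 1).mul_const (log p))).add
    ((hs.add_const_div_natCast 1).mul_const (log (1 - p)))
  rw [one_mul] at hlim
  refine hlim.congr fun N ↦ ?_
  rw [log_negBinomialPMF hp0 hp1]
  push_cast
  ring

end NegativeBinomial

lemma tendsto_log_div_of_le_of_le_mul {c P : ℕ → ℝ} {K L : ℝ}
    (hc : ∀ᶠ N in atTop, 0 < c N) (hlow : ∀ᶠ N in atTop, c N ≤ P N)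
    (hup : ∀ᶠ N in atTop, P N ≤ c N * K) (h : Tendsto (fun N ↦ log (c N) / N) atTop (𝓝 L)) :
    Tendsto (fun N ↦ log (P N) / N) atTop (𝓝 L) := by
  have hupper : Tendsto (fun N ↦ (log (c N) + log K) / N) atTop (𝓝 L) :=
    h.add_const_div_natCast _
  refine tendsto_of_tendsto_of_tendsto_of_le_of_le' h hupper ?_ ?_
  all_goals filter_upwards [hc, hlow, hup] with N hcN hlowN hupN
  · gcongr
  · have hK : K ≠ 0 := by rintro rfl; linarith
    rw [← log_mul hcN.ne' hK]
    gcongr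
    linarith

lemma mul_klBin_eq {p α : ℝ} (hp0 : 0 < p) (hp1 : p < 1) (hα : 0 < α) :
    (1 + α) * klBin (α / (1 + α)) (1 - p) =
      -(negMulLog α - negMulLog (α + 1) + log p + α * log (1 - p)) := by
  have h1p : 0 < 1 - p := by linarith
  have h1α : 1 - α / (1 + α) = 1 / (1 + α) := by field_simp; ring
  rw [klBin, h1α, sub_sub_cancel, log_div (by positivity) h1p.ne', log_div (by positivity) hp0.ne',
    log_div hα.ne' (by positivity), one_div, log_inv, negMulLog, negMulLog, add_comm α 1]
  field_simp
  ring

lemma tendsto_natCast_ceil_mul_sub_one_div {α : ℝ} (hα : 0 < α) :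
    Tendsto (fun N : ℕ ↦ ((⌈α * N⌉₊ - 1 : ℕ) : ℝ) / N) atTop (𝓝 α) := by
  have hceil := (tendsto_nat_ceil_mul_div_atTop hα.le).comp tendsto_natCast_atTop_atTop
  refine (hceil.add_const_div_natCast (-1)).congr' ?_
  filter_upwards [eventually_gt_atTop 0] with N hN
  rw [Nat.cast_pred (Nat.ceil_pos.2 (by positivity))]
  simp [sub_eq_add_neg]

/-- Error exponent for instantaneous homogeneous links: with i.i.d. non-shifted geometric
delays (`P(τ_i = k) = p^k(1-p)`, `k ≥ 0`), `r = ⌈αN⌉` and `α < (1-p)/p`,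
`-(1/N)·ln P(τ₁+⋯+τ_r > N) → (1+α)·D(α/(1+α) ‖ 1-p)`. -/
theorem error_exponent_instantaneous_links
    {Ω : Type*} [MeasurableSpace Ω] (μ : Measure Ω) [IsProbabilityMeasure μ]
    (p : ℝ) (hp0 : 0 < p) (hp1 : p < 1)
    (α : ℝ) (hα0 : 0 < α) (hα1 : α < (1 - p) / p)
    (τ : ℕ → Ω → ℕ) (hmeas : ∀ i, Measurable (τ i))
    (hgeo : ∀ i, ∀ k : ℕ, μ {ω | τ i ω = k} = ENNReal.ofReal (p ^ k * (1 - p)))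
    (hind : iIndepFun τ μ) :
    Tendsto
      (fun N : ℕ =>
        -(1 / (N : ℝ)) *
          Real.log ((μ {ω | N < ∑ i ∈ Finset.range ⌈α * N⌉₊, τ i ω}).toReal))
      atTop (nhds ((1 + α) * klBin (α / (1 + α)) (1 - p))) := by
  have hq : p * (1 + α) < 1 := by
    rw [lt_div_iff₀ hp0] at hα1
    linarith
  set s : ℕ → ℕ := fun N ↦ ⌈α * N⌉₊ - 1
  have hs : ∀ᶠ N : ℕ in atTop, ⌈α * N⌉₊ = s N + 1 ∧ (s N : ℝ) ≤ α * N := by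
    filter_upwards [eventually_gt_atTop 0] with N hN
    have hceil : 0 < ⌈α * N⌉₊ := Nat.ceil_pos.2 (by positivity)
    refine ⟨(Nat.sub_add_cancel hceil).symm, ?_⟩
    rw [Nat.cast_pred hceil]
    linarith [Nat.ceil_lt_add_one (by positivity : 0 ≤ α * N)]
  have hlim := tendsto_log_div_of_le_of_le_mul
    (c := fun N ↦ negBinomialPMF p (s N) (N + 1))
    (P := fun N ↦ (μ {ω | N < ∑ i ∈ Finset.range (s N + 1), τ i ω}).toReal)
    (.of_forall fun N ↦ negBinomialPMF_pos hp0 hp1 _ _)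
    (.of_forall fun N ↦ negBinomialPMF_le_toReal_measure_lt hp0.le hp1.le hmeas hgeo hind N _)
    (hs.mono fun N hN ↦ div_eq_mul_inv _ (1 - p * (1 + α)) ▸
      toReal_measure_lt_le_negBinomialPMF_div hp0.le hp1.le hmeas hgeo hind hα0.le hq hN.2)
    (tendsto_log_negBinomialPMF_div hp0 hp1 hα0 (tendsto_natCast_ceil_mul_sub_one_div hα0))
  rw [mul_klBin_eq hp0 hp1 hα0]
  refine hlim.neg.congr' ?_
  filter_upwards [hs] with N hN
  rw [hN.1]
  ring
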